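/- Let H = {0,1}² ⊆ ℕ² and K = {0,…,5}² \ {2,3}². Then K ⪯ H³, where H³ = σ_H³({(0,0)}) = {0,…,7}² is the 8×8 grid. -/

import Mathlib

attribute [local instance] Classical.propDecidable

namespace SelfAssembly

/-! ### Positions and directions -/

/-- Positions of the discrete plane. -/
abbrev Pos : Type := ℤ × ℤ

/-- The four cardinal directions. -/
inductive Dir : Type
  | N | E | S | W
deriving DecidableEq

/-- The unit vector associated with a direction. -/
def Dir.vec : Dir → Pos
  | .N => (0, 1)
  | .E => (1, 0)
  | .S => (0, -1)
  | .W => (-1, 0)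

/-- The opposite direction. -/
def Dir.opp : Dir → Dir
  | .N => .S
  | .E => .W
  | .S => .N
  | .W => .E

/-- The list of all directions (canonical order). -/
def Dir.all : List Dir := [.N, .E, .S, .W]

/-- Two positions adjacent in the grid graph of ℤ². -/
def gridAdj (z z' : Pos) : Prop := ∃ d : Dir, z' = z + d.vec

lemma gridAdj_symm {z z' : Pos} (h : gridAdj z z') : gridAdj z' z := by
  obtain ⟨d, rfl⟩ := h
  refine ⟨d.opp, ?_⟩
  cases d <;>
    simp [Dir.vec, Dir.opp, Prod.ext_iff, Prod.fst_add, Prod.snd_add]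

lemma gridAdj_irrefl (z : Pos) : ¬ gridAdj z z := by
  rintro ⟨d, h⟩
  cases d <;>
    simp [Dir.vec, Prod.ext_iff, Prod.fst_add, Prod.snd_add] at h

noncomputable section

/-! ### Shapes and substitutions on ℕ² -/

/-- Positions with natural coordinates. -/
abbrev NPos : Type := ℕ × ℕ

/-- The embedding of ℕ² into ℤ². -/
def embedN (p : NPos) : Pos := ((p.1 : ℤ), (p.2 : ℤ))

/-- The bounding-box width of a shape: `1 +` the maximal x-coordinate. -/
def wdt (G : Set NPos) : ℕ := sSup (Prod.fst '' G) + 1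

/-- The bounding-box height of a shape: `1 +` the maximal y-coordinate. -/
def hgt (G : Set NPos) : ℕ := sSup (Prod.snd '' G) + 1

/-- The substitution associated with a generator `G`:
`σ_G(X) = { p | ⌊p / G⌋ ∈ X ∧ p mod G ∈ G }`. -/
def subst (G : Set NPos) (X : Set NPos) : Set NPos :=
  {p | (p.1 / wdt G, p.2 / hgt G) ∈ X ∧ (p.1 % wdt G, p.2 % hgt G) ∈ G}

/-- The `k`-th iterate `G^k = σ_G^k({(0,0)})`. -/
def iterG (G : Set NPos) (k : ℕ) : Set NPos := (subst G)^[k] {(0, 0)}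

/-- The discrete self-similar fractal shape `G^∞ = ⋃ₖ G^k`. -/
def limitG (G : Set NPos) : Set NPos := ⋃ k, iterG G k

/-- A shape is connected if any two of its cells are linked by a path of
grid-adjacent cells of the shape. -/
def ShapeConnected (G : Set NPos) : Prop :=
  ∀ p ∈ G, ∀ q ∈ G,
    Relation.ReflTransGen (fun a b => a ∈ G ∧ b ∈ G ∧ gridAdj (embedN a) (embedN b)) p q

/-- The generator `K = {0,…,5}² \ {2,3}²` of the Sierpinski Cacarpet. -/
def Kgen : Set NPos :=
  {p | p.1 < 6 ∧ p.2 < 6 ∧ ¬((p.1 = 2 ∨ p.1 = 3) ∧ (p.2 = 2 ∨ p.2 = 3))}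

/-- The 2×2 square `H = {0,1}²`. -/
def Hsq : Set NPos := {p | p.1 < 2 ∧ p.2 < 2}

/-! ### Grids, grid neighborhood graphs, ports, bandwidth -/

/-- The grid `G^#`: all positions of ℤ² which are congruent, modulo the
bounding box of `G`, to a cell of `G`. -/
def gridOf (G : Set NPos) : Set Pos :=
  {z | ((z.1 % (wdt G : ℤ)).toNat, (z.2 % (hgt G : ℤ)).toNat) ∈ G}

/-- The vertex set of the grid neighborhood graph `G⁺`:
`G` together with the grid cells at distance 1 of `G`. -/
def gplusV (G : Set NPos) : Set Pos :=
  embedN '' G ∪ {z | z ∈ gridOf G ∧ ∃ d : Dir, z + d.vec ∈ embedN '' G}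

/-- The grid neighborhood graph `G⁺`: the subgraph of the grid graph of ℤ²
induced by `gplusV G`. -/
def gplus (G : Set NPos) : SimpleGraph Pos where
  Adj z z' := z ∈ gplusV G ∧ z' ∈ gplusV G ∧ gridAdj z z'
  symm := ⟨fun _ _ h => ⟨h.2.1, h.1, gridAdj_symm h.2.2⟩⟩
  loopless := ⟨fun z h => gridAdj_irrefl z h.2.2⟩

/-- The `d`-port of `G`: `G^{+d} = {p ∈ G^# : p − d ∈ G}`. -/
def port (G : Set NPos) (d : Dir) : Set Pos :=
  {z | z ∈ gridOf G ∧ z - d.vec ∈ embedN '' G}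

/-- There exist `n` pairwise vertex-disjoint paths in `Gr` from `Src` to `Tgt`. -/
def DisjointConnections (Gr : SimpleGraph Pos) (Src Tgt : Set Pos) (n : ℕ) : Prop :=
  ∃ (u v : Fin n → Pos) (w : ∀ i, Gr.Walk (u i) (v i)),
    (∀ i, u i ∈ Src) ∧ (∀ i, v i ∈ Tgt) ∧ (∀ i, (w i).IsPath) ∧
    ∀ i j, i ≠ j → ∀ z, z ∈ (w i).support → z ∉ (w j).support

/-- The `(d,d')`-bandwidth of `G`: the maximal number of pairwise
vertex-disjoint paths from the `d`-port to the `d'`-port in `G⁺`. -/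
def bandwidth (G : Set NPos) (d d' : Dir) : ℕ :=
  sSup {n | DisjointConnections (gplus G) (port G d) (port G d') n}

/-! ### Subconnectors -/

/-- A witness that `G⁺` (with its ports marked) contains a pointed subgraph
which is a pointed subdivision of `H⁺` (with its ports marked): an injective
map `φ` of the vertices of `H⁺` sending `d`-ports to `d`-ports, together with,
for each edge of `H⁺`, a path of `G⁺` between the images of its endpoints,
these paths being internally disjoint from each other and from the images of
the vertices of `H⁺`. -/
structure SubdivEmbed (H G : Set NPos) where
  φ : Pos → Pos
  inj : Set.InjOn φ (gplusV H)
  marks : ∀ d : Dir, ∀ v ∈ port H d, φ v ∈ port G d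
  walk : ∀ u v : Pos, (gplus H).Adj u v → (gplus G).Walk (φ u) (φ v)
  walk_path : ∀ u v h, (walk u v h).IsPath
  walk_avoid : ∀ u v h, ∀ z ∈ (walk u v h).support,
      ∀ w ∈ gplusV H, z = φ w → (w = u ∨ w = v)
  walk_disj : ∀ u v h u' v' h', ¬((u = u' ∧ v = v') ∨ (u = v' ∧ v = u')) →
      ∀ z, z ∈ (walk u v h).support → z ∈ (walk u' v' h').support →
        ((z = φ u ∨ z = φ v) ∧ (z = φ u' ∨ z = φ v'))

/-- `H` is a subconnector of `G`, written `H ⪯ G`. -/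
def Subconnector (H G : Set NPos) : Prop := Nonempty (SubdivEmbed H G)

/-- Integer division of a position by the bounding box of a shape. -/
def quotP (P : Set NPos) (z : Pos) : Pos := (z.1.fdiv (wdt P), z.2.fdiv (hgt P))

/-- Remainder of a position modulo the bounding box of a shape. -/
def modP (P : Set NPos) (z : Pos) : Pos := (z.1.fmod (wdt P), z.2.fmod (hgt P))

/-- `v` is a `D`-disconnector of `P⁺`: for every pair `(d,d') ∈ D`, removing
`v` from `P⁺` disconnects the `d`-port from the `d'`-port. -/
def Disconnector (P : Set NPos) (D : Set (Dir × Dir)) (v : Pos) : Prop :=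
  ∀ dd ∈ D, ¬ ∃ (a b : Pos) (w : (gplus P).Walk a b),
      a ∈ port P dd.1 ∧ b ∈ port P dd.2 ∧ v ∉ w.support

/-- `Cause(v, D)`: the pairs of directions `(δ, δ')` such that some path of
`P⁺` from a `d`-port to a `d'`-port with `(d,d') ∈ D` enters `v` from
direction `δ` and leaves it through direction `δ'`. -/
def Cause (P : Set NPos) (D : Set (Dir × Dir)) (v : Pos) : Set (Dir × Dir) :=
  {p | ∃ dd ∈ D, ∃ (a b : Pos) (w : (gplus P).Walk a b),
      a ∈ port P dd.1 ∧ b ∈ port P dd.2 ∧ w.IsPath ∧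
      ∃ i : ℕ, w.support[i]? = some (v - p.1.vec) ∧
        w.support[i + 1]? = some v ∧
        w.support[i + 2]? = some (v + p.2.vec)}

/-! ### The abstract Tile Assembly Model -/

/-- A Wang tile: a glue on each side. -/
abbrev Tile (Glue : Type) := Dir → Glue

/-- An assembly: a partial function from positions to tiles. -/
abbrev Assembly (Glue : Type) := Pos → Option (Tile Glue)

/-- The domain of an assembly. -/
def adom {Glue : Type} (A : Assembly Glue) : Set Pos := {z | A z ≠ none}

/-- A seeded tile assembly system. -/
structure TAS (Glue : Type) where
  tileset : Finset (Tile Glue)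
  strength : Glue → ℤ
  temp : ℕ
  seed : Assembly Glue
  seed_tiles : ∀ z t, seed z = some t → t ∈ tileset

/-- The binding of the edge out of `z` in direction `d` in the assembly `A`:
the strength of the common glue if the two facing glues match, `0` otherwise. -/
def binding {Glue : Type} (S : TAS Glue) (A : Assembly Glue) (z : Pos) (d : Dir) : ℤ :=
  match A z, A (z + d.vec) with
  | some t, some t' => if t d = t' d.opp then S.strength (t d) else 0
  | _, _ => 0

/-- An assembly is stable if every cut of its domain is crossed by edges of
total binding at least the temperature. -/
def Stable {Glue : Type} (S : TAS Glue) (A : Assembly Glue) : Prop :=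
  ∀ P : Set Pos, P ⊆ adom A → P.Nonempty → (adom A \ P).Nonempty →
    ∃ F : Finset (Pos × Dir),
      (∀ e ∈ F, e.1 ∈ P ∧ e.1 + e.2.vec ∈ adom A \ P) ∧
      (S.temp : ℤ) ≤ ∑ e ∈ F, binding S A e.1 e.2

/-- `Attach S A B`: `B` is obtained from `A` by attaching one tile of the
tileset at an empty position, the result being stable. -/
def Attach {Glue : Type} (S : TAS Glue) (A B : Assembly Glue) : Prop :=
  ∃ t ∈ S.tileset, ∃ z : Pos, A z = none ∧ B = Function.update A z (some t) ∧ Stable S B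

/-- A production of `S`: an assembly which is the limit of a (finite or
infinite) sequence of attachments starting from the seed. -/
def IsProduction {Glue : Type} (S : TAS Glue) (A : Assembly Glue) : Prop :=
  ∃ α : ℕ → Assembly Glue, α 0 = S.seed ∧
    (∀ n, α (n + 1) = α n ∨ Attach S (α n) (α (n + 1))) ∧
    ∀ z t, A z = some t ↔ ∃ n, (α n) z = some t

/-- A terminal production: a production to which no tile can be attached. -/
def Terminal {Glue : Type} (S : TAS Glue) (A : Assembly Glue) : Prop :=
  IsProduction S A ∧ ∀ B, ¬ Attach S A B

/-- `S` strictly self-assembles `X`: every terminal production has domain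
exactly `X`. -/
def StrictlyAssembles {Glue : Type} (S : TAS Glue) (X : Set Pos) : Prop :=
  ∀ A, Terminal S A → adom A = X

/-- `S` weakly self-assembles `X`: there is a subset `Y` of the tileset such
that in every terminal production, the positions carrying a tile of `Y` are
exactly those of `X`. -/
def WeaklyAssembles {Glue : Type} (S : TAS Glue) (X : Set Pos) : Prop :=
  ∃ Y : Finset (Tile Glue), Y ⊆ S.tileset ∧
    ∀ A, Terminal S A → ∀ z : Pos, (∃ t ∈ Y, A z = some t) ↔ z ∈ X

/-! ### Sets of assemblies for the Tree Pump Lemma -/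

/-- The fill-in of `D`: `D` together with the positions from which every
(self-avoiding) path avoiding `D` is finite. -/
def fillIn (D : Set Pos) : Set Pos :=
  D ∪ {p | ¬ ∃ f : ℕ → Pos, f 0 = p ∧ Function.Injective f ∧
        ∀ n, f n ∉ D ∧ gridAdj (f n) (f (n + 1))}

/-- The assembly `A` encircles an `m × m` square: the fill-in of its domain
contains a full `m × m` square of positions. -/
def Encircles {Glue : Type} (A : Assembly Glue) (m : ℕ) : Prop :=
  ∃ z : Pos, ∀ i j : ℕ, i < m → j < m → z + ((i : ℤ), (j : ℤ)) ∈ fillIn (adom A)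

/-- Inner product of a position with a real vector. -/
def dot (p : Pos) (dv : ℝ × ℝ) : ℝ := (p.1 : ℝ) * dv.1 + (p.2 : ℝ) * dv.2

/-- The assembly covers no position `p` with `p·d > k + |seed|`. -/
def BBounded {Glue : Type} (S : TAS Glue) (k : ℝ) (dv : ℝ × ℝ) (A : Assembly Glue) : Prop :=
  ∀ p ∈ adom A, dot p dv ≤ k + (adom S.seed).ncard

/-- The assembly contains a nonempty subassembly periodic with a period `p`
with `|p·d| > 0`. -/
def PPeriodic {Glue : Type} (dv : ℝ × ℝ) (A : Assembly Glue) : Prop :=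
  ∃ pv : Pos, dot pv dv ≠ 0 ∧
    ∃ E : Set Pos, E.Nonempty ∧ E ⊆ adom A ∧ ∀ z ∈ E, z + pv ∈ E ∧ A (z + pv) = A z

/-! ### Embedded circuits -/

/-- A wiring on a unit cell: an ordered list of input sides, a set of output
sides (the remaining sides being inert), and for each output side its
output-wire datum (the ordered input sides of the next cell, with the
distinguished opposite direction) and the index of the corresponding output of
the gate. -/
structure Wiring where
  inputs : List Dir
  inputs_nodup : inputs.Nodup
  outputs : Finset Dir
  disjoint : ∀ d ∈ inputs, d ∉ outputs
  outWire : Dir → List Dir × Dir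
  outWire_distinguished : ∀ d ∈ outputs,
    (outWire d).2 = d.opp ∧ d.opp ∈ (outWire d).1 ∧ (outWire d).1.Nodup
  outIdx : Dir → ℕ
  outIdx_lt : ∀ d ∈ outputs, outIdx d < outputs.card
  outIdx_inj : ∀ d ∈ outputs, ∀ d' ∈ outputs, outIdx d = outIdx d' → d = d'

/-- A gate: a wiring together with a function (a function `Σ^i → Σ^o`,
represented as a function on lists; see the field `fn_arity` of `Circuit`). -/
structure Gate (A : Type) where
  wiring : Wiring
  fn : List A → List A

/-- A circuit on the alphabet `A`: gates placed on the vertex set `dom` of an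
oriented subgraph of ℤ² with arc set `arcs`, with input and output buses of
boundary arcs, such that wirings of neighbouring gates match. -/
structure Circuit (A : Type) where
  dom : Set Pos
  arcs : Set (Pos × Dir)
  inputBus : Set (Pos × Dir)
  outputBus : Set (Pos × Dir)
  gate : Pos → Gate A
  arcs_src : ∀ a ∈ arcs, a.1 ∈ dom
  arcs_tgt : ∀ a ∈ arcs, a.1 + a.2.vec ∈ dom
  arcs_once : ∀ a ∈ arcs, (a.1 + a.2.vec, a.2.opp) ∉ arcs
  inputBus_mem : ∀ a ∈ inputBus, a.1 ∉ dom ∧ a.1 + a.2.vec ∈ dom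
  outputBus_mem : ∀ a ∈ outputBus, a.1 ∈ dom ∧ a.1 + a.2.vec ∉ dom
  arc_wiring : ∀ a ∈ arcs,
      a.2 ∈ (gate a.1).wiring.outputs ∧
      a.2.opp ∈ (gate (a.1 + a.2.vec)).wiring.inputs ∧
      (gate a.1).wiring.outWire a.2 = ((gate (a.1 + a.2.vec)).wiring.inputs, a.2.opp)
  nonarc_inert : ∀ z ∈ dom, ∀ d : Dir, z + d.vec ∈ dom →
      (z, d) ∉ arcs → (z + d.vec, d.opp) ∉ arcs →
      d ∉ (gate z).wiring.inputs ∧ d ∉ (gate z).wiring.outputs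
  boundary : ∀ z ∈ dom, ∀ d : Dir, z + d.vec ∉ dom →
      ((d ∉ (gate z).wiring.inputs ∧ d ∉ (gate z).wiring.outputs ∧
          (z, d) ∉ outputBus ∧ (z + d.vec, d.opp) ∉ inputBus) ∨
       (d ∈ (gate z).wiring.outputs ∧ (z, d) ∈ outputBus) ∨
       (d ∈ (gate z).wiring.inputs ∧ (z + d.vec, d.opp) ∈ inputBus))
  fn_arity : ∀ z ∈ dom, ∀ xs : List A, xs.length = (gate z).wiring.inputs.length →
      ((gate z).fn xs).length = (gate z).wiring.outputs.card

/-- The list of values carried by the incoming arcs of the cell `z`, in the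
order of the input sides of its gate. -/
def inputVals {A : Type} (C : Circuit A) (v : Pos × Dir → A) (z : Pos) : List A :=
  (C.gate z).wiring.inputs.map fun e => v (z + e.vec, e.opp)

/-- An arc valuation conforms to the circuit `C` if, at each gate, the values
on the output arcs are the components of the gate's function applied to the
values on its input arcs. -/
def Conforms {A : Type} (C : Circuit A) (v : Pos × Dir → A) : Prop :=
  ∀ z ∈ C.dom, ∀ d ∈ (C.gate z).wiring.outputs,
    ((C.gate z).fn (inputVals C v z))[(C.gate z).wiring.outIdx d]? = some (v (z, d))

/-- A circuit is closed when its input bus is empty. -/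
def Circuit.Closed {A : Type} (C : Circuit A) : Prop := C.inputBus = ∅

/-- Well-foundedness of the dependency graph: no directed cycle and no
infinite backwards path. -/
def Circuit.WellFoundedDep {A : Type} (C : Circuit A) : Prop :=
  WellFounded fun b a : Pos => ∃ d : Dir, (b, d) ∈ C.arcs ∧ b + d.vec = a

/-- An evaluable circuit: well-founded and finitely rooted. -/
def Circuit.Evaluable {A : Type} (C : Circuit A) : Prop :=
  C.WellFoundedDep ∧ C.inputBus.Finite ∧
    {z | z ∈ C.dom ∧ (C.gate z).wiring.inputs = []}.Finite

/-- A circuit is self-describing if some decoding function recovers the gate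
at each position from the list of pairs (value, direction) of its incoming
arcs in the conforming valuation. -/
def Circuit.SelfDescribing {A : Type} (C : Circuit A) : Prop :=
  ∃ dec : List (A × Dir) → Gate A,
    ∀ v : Pos × Dir → A, Conforms C v → ∀ z ∈ C.dom,
      dec ((C.gate z).wiring.inputs.map fun e => (v (z + e.vec, e.opp), e.opp)) = C.gate z

/-! ### Oriented graphs on ℤ² and locally deterministic arc colorings -/

/-- An oriented subgraph of ℤ², with arcs between adjacent cells and at most
one arc per edge. An arc is a pair `(z, d)`: the arc out of `z` in
direction `d`. -/
structure ArcGraph where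
  verts : Set Pos
  arcs : Set (Pos × Dir)
  arcs_src : ∀ a ∈ arcs, a.1 ∈ verts
  arcs_tgt : ∀ a ∈ arcs, a.1 + a.2.vec ∈ verts
  arcs_once : ∀ a ∈ arcs, (a.1 + a.2.vec, a.2.opp) ∉ arcs

/-- The directions of the incoming arcs of `v` (canonical order). -/
def inDirsOf (Ar : Set (Pos × Dir)) (v : Pos) : List Dir :=
  Dir.all.filter fun e => (v - e.vec, e) ∈ Ar

/-- The input vector of a vertex: the list of pairs (direction, color) of its
incoming arcs. -/
def inputVectorOf {C : Type} (Ar : Set (Pos × Dir)) (P : Pos × Dir → C) (v : Pos) :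
    List (Dir × C) :=
  (inDirsOf Ar v).map fun e => (e, P (v - e.vec, e))

/-- A coloring `P` of the arcs `Ar` is locally deterministic if there are two
prediction functions `πin`, `πsym` such that for every arc `e : a → b` in
direction `d`, `P e = πsym (input vector of a, d)` and `πin (d, P e)` is the
set of directions of the incoming arcs of `b`. -/
def LocallyDeterministic {C : Type} (Ar : Set (Pos × Dir)) (P : Pos × Dir → C) : Prop :=
  ∃ (πin : Dir × C → Set Dir) (πsym : List (Dir × C) × Dir → C),
    ∀ a ∈ Ar,
      P a = πsym (inputVectorOf Ar P a.1, a.2) ∧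
      πin (a.2, P a) = {e : Dir | (a.1 + a.2.vec - e.vec, e) ∈ Ar}

/-- The vertex type of `v`: the partial function assigning to each direction
`d` in which `v` has an arc the pair (direction of that arc, its color). -/
def vertexType {C : Type} (Ar : Set (Pos × Dir)) (P : Pos × Dir → C) (v : Pos) :
    Dir → Option (Dir × C) := fun d =>
  if (v, d) ∈ Ar then some (d, P (v, d))
  else if (v + d.vec, d.opp) ∈ Ar then some (d.opp, P (v + d.vec, d.opp))
  else none

/-- The atlas of a coloring: the set of vertex types of its vertices. -/
def atlas {C : Type} (Gr : ArcGraph) (P : Pos × Dir → C) : Set (Dir → Option (Dir × C)) :=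
  (vertexType Gr.arcs P) '' Gr.verts

/-- Well-foundedness (acyclicity + no infinite backwards path) of an oriented
graph on ℤ². -/
def ArcGraph.WellFoundedArcs (Gr : ArcGraph) : Prop :=
  WellFounded fun b a : Pos => ∃ d : Dir, (b, d) ∈ Gr.arcs ∧ b + d.vec = a

/-- The vertices of in-degree 0 of an oriented graph on ℤ². -/
def ArcGraph.roots (Gr : ArcGraph) : Set Pos :=
  {v | v ∈ Gr.verts ∧ ∀ e : Dir, (v - e.vec, e) ∉ Gr.arcs}

end

/-!
The iterates of a full rectangle are full rectangles, so `H³` is the 8×8 square. For the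
subconnector part, `K` lies in the 6×6 square, and any full rectangle is a subconnector of any
larger one: shift the cells of nonnegative `x`-coordinate by `m` and those of nonnegative
`y`-coordinate by `m'`. The edges of the grid neighborhood graph between the ports at
coordinate `-1` and the rectangle become straight paths of length `m + 1` (resp. `m' + 1`),
every other edge stays an edge, and the new internal vertices have a coordinate in the gap
`[0, m)` (resp. `[0, m')`), which the shift misses; the other coordinate tells which edge they
subdivide, so the paths of distinct edges are internally disjoint.
-/

lemma mem_embedN_image {G : Set NPos} {z : Pos} :
    z ∈ embedN '' G ↔ 0 ≤ z.1 ∧ 0 ≤ z.2 ∧ (z.1.toNat, z.2.toNat) ∈ G := by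
  constructor
  · rintro ⟨p, hp, rfl⟩
    simpa [embedN] using hp
  · rintro ⟨h₁, h₂, hz⟩
    exact ⟨_, hz, Prod.ext (Int.toNat_of_nonneg h₁) (Int.toNat_of_nonneg h₂)⟩

section Monotonicity

variable {H H' G : Set NPos}

lemma gplusV_mono (hH : H ⊆ H') (hgrid : gridOf H ⊆ gridOf H') : gplusV H ⊆ gplusV H' := by
  rintro z (hz | ⟨hg, d, hd⟩)
  · exact Or.inl (Set.image_mono hH hz)
  · exact Or.inr ⟨hgrid hg, d, Set.image_mono hH hd⟩

lemma port_mono (hH : H ⊆ H') (hgrid : gridOf H ⊆ gridOf H') (d : Dir) :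
    port H d ⊆ port H' d :=
  fun _ ⟨hg, hz⟩ => ⟨hgrid hg, Set.image_mono hH hz⟩

theorem Subconnector.of_subset (hH : H ⊆ H') (hgrid : gridOf H ⊆ gridOf H')
    (h : Subconnector H' G) : Subconnector H G := by
  obtain ⟨e⟩ := h
  have hV := gplusV_mono hH hgrid
  have hadj : ∀ {u v}, (gplus H).Adj u v → (gplus H').Adj u v :=
    fun h => ⟨hV h.1, hV h.2.1, h.2.2⟩
  exact ⟨{ φ := e.φ
           inj := e.inj.mono hV
           marks := fun d v hv => e.marks d v (port_mono hH hgrid d hv)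
           walk := fun u v h => e.walk u v (hadj h)
           walk_path := fun u v h => e.walk_path u v (hadj h)
           walk_avoid := fun u v h z hz w hw => e.walk_avoid u v (hadj h) z hz w (hV hw)
           walk_disj := fun u v h u' v' h' => e.walk_disj u v (hadj h) u' v' (hadj h') }⟩

end Monotonicity

section LabelledPaths

/-- The vertices allowed on the path replacing the edge `{u, v}`. Tagging internal vertices with
their edge through `label` is what makes the paths of distinct edges internally disjoint. -/
def OnSubdividedEdge (φ : Pos → Pos) (label : Pos → Sym2 Pos) (u v z : Pos) : Prop :=
  z = φ u ∨ z = φ v ∨ (z ∉ Set.range φ ∧ label z = s(u, v))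

variable {φ : Pos → Pos} {label : Pos → Sym2 Pos} {u v z : Pos}

lemma OnSubdividedEdge.symm (h : OnSubdividedEdge φ label u v z) :
    OnSubdividedEdge φ label v u z := by
  rcases h with h | h | ⟨hr, hl⟩
  · exact Or.inr (Or.inl h)
  · exact Or.inl h
  · exact Or.inr (Or.inr ⟨hr, hl.trans Sym2.eq_swap⟩)

lemma OnSubdividedEdge.eq_or_eq_of_mem_range (h : OnSubdividedEdge φ label u v z)
    (hz : z ∈ Set.range φ) : z = φ u ∨ z = φ v :=
  h.imp_right fun h => h.resolve_right fun h' => h'.1 hz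

lemma OnSubdividedEdge.label_eq_of_notMem_range (h : OnSubdividedEdge φ label u v z)
    (hz : z ∉ Set.range φ) : label z = s(u, v) := by
  rcases h with rfl | rfl | ⟨-, hl⟩
  · exact absurd ⟨u, rfl⟩ hz
  · exact absurd ⟨v, rfl⟩ hz
  · exact hl

theorem subconnector_of_onSubdividedEdge {H G : Set NPos} (hinj : Set.InjOn φ (gplusV H))
    (hmarks : ∀ d : Dir, ∀ v ∈ port H d, φ v ∈ port G d)
    (hpath : ∀ u v, (gplus H).Adj u v → ∃ w : (gplus G).Walk (φ u) (φ v),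
      w.IsPath ∧ ∀ z ∈ w.support, OnSubdividedEdge φ label u v z) :
    Subconnector H G := by
  choose walk hwalk hon using hpath
  refine ⟨{ φ := φ
            inj := hinj
            marks := hmarks
            walk := walk
            walk_path := hwalk
            walk_avoid := ?_
            walk_disj := ?_ }⟩
  · rintro u v h _ hz w hw rfl
    exact ((hon u v h _ hz).eq_or_eq_of_mem_range ⟨w, rfl⟩).imp
      (hinj hw h.1) (hinj hw h.2.1)
  · intro u v h u' v' h' hne z hz hz'
    by_cases hr : z ∈ Set.range φ
    · exact ⟨(hon u v h z hz).eq_or_eq_of_mem_range hr,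
        (hon u' v' h' z hz').eq_or_eq_of_mem_range hr⟩
    · exact absurd (Sym2.eq_iff.1 (((hon u v h z hz).label_eq_of_notMem_range hr).symm.trans
        ((hon u' v' h' z hz').label_eq_of_notMem_range hr))) hne

end LabelledPaths

lemma exists_walk_support_eq_map_range {V : Type*} {Γ : SimpleGraph V} (f : ℕ → V) (n : ℕ)
    (h : ∀ i < n, Γ.Adj (f i) (f (i + 1))) :
    ∃ w : Γ.Walk (f 0) (f n), w.support = (List.range (n + 1)).map f := by
  induction n with
  | zero => exact ⟨.nil, rfl⟩
  | succ n ih =>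
    obtain ⟨w, hw⟩ := ih fun i hi => h i (by omega)
    refine ⟨w.concat (h n (by omega)), ?_⟩
    rw [SimpleGraph.Walk.support_concat, hw, List.range_succ (n := n + 1), List.map_append]
    rfl

section Rectangle

def rect (a b : ℕ) : Set NPos := {p | p.1 < a ∧ p.2 < b}

variable {a b : ℕ}

lemma wdt_rect (ha : 0 < a) (hb : 0 < b) : wdt (rect a b) = a := by
  have : sSup (Prod.fst '' rect a b) = a - 1 := by
    refine IsGreatest.csSup_eq ⟨⟨(a - 1, 0), ⟨by omega, hb⟩, rfl⟩, ?_⟩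
    rintro _ ⟨p, hp, rfl⟩
    exact Nat.le_sub_one_of_lt hp.1
  rw [wdt, this]
  omega

lemma hgt_rect (ha : 0 < a) (hb : 0 < b) : hgt (rect a b) = b := by
  have : sSup (Prod.snd '' rect a b) = b - 1 := by
    refine IsGreatest.csSup_eq ⟨⟨(0, b - 1), ⟨ha, by omega⟩, rfl⟩, ?_⟩
    rintro _ ⟨p, hp, rfl⟩
    exact Nat.le_sub_one_of_lt hp.2
  rw [hgt, this]
  omega

lemma subst_rect (ha : 0 < a) (hb : 0 < b) (c d : ℕ) :
    subst (rect a b) (rect c d) = rect (c * a) (d * b) := by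
  ext p
  rw [subst, wdt_rect ha hb, hgt_rect ha hb]
  simp only [rect, Set.mem_ofPred_eq,
    Nat.div_lt_iff_lt_mul ha, Nat.div_lt_iff_lt_mul hb, Nat.mod_lt _ ha, Nat.mod_lt _ hb,
    and_true]

lemma iterG_rect (ha : 0 < a) (hb : 0 < b) (k : ℕ) :
    iterG (rect a b) k = rect (a ^ k) (b ^ k) := by
  induction k with
  | zero =>
    ext ⟨x, y⟩
    simp only [iterG, Function.iterate_zero, id_eq, Set.mem_singleton_iff, Prod.mk.injEq,
      rect, pow_zero, Set.mem_ofPred_eq]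
    omega
  | succ k ih =>
    rw [iterG] at ih ⊢
    rw [Function.iterate_succ_apply', ih, subst_rect ha hb, pow_succ, pow_succ]

lemma mem_embedN_image_rect {z : Pos} :
    z ∈ embedN '' rect a b ↔ 0 ≤ z.1 ∧ z.1 < a ∧ 0 ≤ z.2 ∧ z.2 < b := by
  simp only [mem_embedN_image, rect, Set.mem_ofPred_eq]
  omega

lemma gridOf_rect (ha : 0 < a) (hb : 0 < b) : gridOf (rect a b) = Set.univ := by
  ext z
  rw [gridOf, wdt_rect ha hb, hgt_rect ha hb]
  simp only [rect, Set.mem_ofPred_eq, Set.mem_univ, iff_true]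
  have := Int.emod_nonneg z.1 (b := a) (by omega)
  have := Int.emod_lt_of_pos z.1 (b := a) (by omega)
  have := Int.emod_nonneg z.2 (b := b) (by omega)
  have := Int.emod_lt_of_pos z.2 (b := b) (by omega)
  omega

lemma mem_gplusV_rect (ha : 0 < a) (hb : 0 < b) {z : Pos} :
    z ∈ gplusV (rect a b) ↔ -1 ≤ z.1 ∧ z.1 ≤ a ∧ -1 ≤ z.2 ∧ z.2 ≤ b ∧
      (0 ≤ z.1 ∧ z.1 < a ∨ 0 ≤ z.2 ∧ z.2 < b) := by
  simp only [gplusV, gridOf_rect ha hb, Set.mem_union, Set.mem_ofPred_eq, Set.mem_univ,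
    true_and, mem_embedN_image_rect]
  constructor
  · rintro (h | ⟨d, hd⟩)
    · omega
    · cases d <;> simp only [Dir.vec, Prod.fst_add, Prod.snd_add] at hd <;> omega
  · intro h
    by_cases hin : 0 ≤ z.1 ∧ z.1 < a ∧ 0 ≤ z.2 ∧ z.2 < b
    · exact Or.inl hin
    · right
      have : z.1 = -1 ∨ z.1 = a ∨ z.2 = -1 ∨ z.2 = b := by omega
      rcases this with h' | h' | h' | h'
      exacts [⟨.E, by simp only [Dir.vec, Prod.fst_add, Prod.snd_add]; omega⟩,
        ⟨.W, by simp only [Dir.vec, Prod.fst_add, Prod.snd_add]; omega⟩,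
        ⟨.N, by simp only [Dir.vec, Prod.fst_add, Prod.snd_add]; omega⟩,
        ⟨.S, by simp only [Dir.vec, Prod.fst_add, Prod.snd_add]; omega⟩]

lemma add_smul_vec_mem_gplusV_rect (ha : 0 < a) (hb : 0 < b) {z : Pos} {d : Dir} {i n : ℕ}
    (hi : i ≤ n) (h₀ : z ∈ gplusV (rect a b)) (hn : z + (n : ℤ) • d.vec ∈ gplusV (rect a b)) :
    z + (i : ℤ) • d.vec ∈ gplusV (rect a b) := by
  rw [mem_gplusV_rect ha hb] at *
  cases d <;> simp only [Dir.vec, Prod.fst_add, Prod.snd_add, Prod.smul_mk, smul_eq_mul,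
    mul_one, mul_zero, mul_neg, add_zero] at * <;> omega

end Rectangle

section Stretch

variable (m m' : ℕ)

def stretch (t : ℤ) : ℤ := if t < 0 then t else t + m

/-- `unstretchLo` and `unstretchHi` invert `stretch` on its range and send the gap `[0, m)` to the
two ends `-1`, `0` of the edge subdivided there. -/
def unstretchLo (t : ℤ) : ℤ := if t < 0 then t else if t < m then -1 else t - m

def unstretchHi (t : ℤ) : ℤ := if t < 0 then t else if t < m then 0 else t - m

lemma stretch_injective : Function.Injective (stretch m) := by
  intro t t' h
  unfold stretch at h
  split_ifs at h <;> omega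

lemma stretch_notMem_gap (t : ℤ) : ¬(0 ≤ stretch m t ∧ stretch m t < m) := by
  unfold stretch
  split_ifs <;> omega

lemma unstretchLo_stretch (t : ℤ) : unstretchLo m (stretch m t) = t := by
  unfold unstretchLo stretch
  split_ifs <;> omega

lemma unstretchHi_stretch (t : ℤ) : unstretchHi m (stretch m t) = t := by
  unfold unstretchHi stretch
  split_ifs <;> omega

lemma exists_stretch_add_one (t : ℤ) :
    ∃ n : ℕ, 0 < n ∧ stretch m (t + 1) = stretch m t + n ∧
      ∀ i : ℕ, 0 < i → i < n → (0 ≤ stretch m t + i ∧ stretch m t + i < m) ∧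
        unstretchLo m (stretch m t + i) = t ∧ unstretchHi m (stretch m t + i) = t + 1 := by
  by_cases ht : t = -1
  · subst ht
    refine ⟨m + 1, by omega, ?_, fun i hi hin => ?_⟩
    · simp only [stretch]
      push_cast
      omega
    · simp only [stretch, unstretchLo, unstretchHi]
      split_ifs <;> omega
  · refine ⟨1, one_pos, ?_, fun i hi hin => by omega⟩
    simp only [stretch]
    split_ifs <;> push_cast <;> omega

def stretchPos (z : Pos) : Pos := (stretch m z.1, stretch m' z.2)

def gapEdge (z : Pos) : Sym2 Pos :=
  s((unstretchLo m z.1, unstretchLo m' z.2), (unstretchHi m z.1, unstretchHi m' z.2))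

lemma stretchPos_injective : Function.Injective (stretchPos m m') :=
  fun _ _ h => Prod.ext (stretch_injective m (congrArg Prod.fst h))
    (stretch_injective m' (congrArg Prod.snd h))

lemma stretchPos_notMem_range_of_fst {z : Pos} (hz : 0 ≤ z.1 ∧ z.1 < m) :
    z ∉ Set.range (stretchPos m m') := by
  rintro ⟨w, rfl⟩
  exact stretch_notMem_gap m w.1 hz

lemma stretchPos_notMem_range_of_snd {z : Pos} (hz : 0 ≤ z.2 ∧ z.2 < m') :
    z ∉ Set.range (stretchPos m m') := by
  rintro ⟨w, rfl⟩
  exact stretch_notMem_gap m' w.2 hz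

lemma exists_stretchPos_add_vec {d : Dir} (hd : d = .E ∨ d = .N) (u : Pos) :
    ∃ n : ℕ, 0 < n ∧ stretchPos m m' (u + d.vec) = stretchPos m m' u + (n : ℤ) • d.vec ∧
      ∀ i : ℕ, 0 < i → i < n →
        stretchPos m m' u + (i : ℤ) • d.vec ∉ Set.range (stretchPos m m') ∧
          gapEdge m m' (stretchPos m m' u + (i : ℤ) • d.vec) = s(u, u + d.vec) := by
  obtain ⟨x, y⟩ := u
  rcases hd with rfl | rfl
  · obtain ⟨n, hn, hstep, hgap⟩ := exists_stretch_add_one m x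
    refine ⟨n, hn, by simp [stretchPos, Dir.vec, hstep], fun i hi hin => ?_⟩
    obtain ⟨hmem, hlo, hhi⟩ := hgap i hi hin
    exact ⟨stretchPos_notMem_range_of_fst m m' (by simpa [stretchPos, Dir.vec] using hmem),
      by simp [gapEdge, stretchPos, Dir.vec, hlo, hhi, unstretchLo_stretch, unstretchHi_stretch]⟩
  · obtain ⟨n, hn, hstep, hgap⟩ := exists_stretch_add_one m' y
    refine ⟨n, hn, by simp [stretchPos, Dir.vec, hstep], fun i hi hin => ?_⟩
    obtain ⟨hmem, hlo, hhi⟩ := hgap i hi hin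
    exact ⟨stretchPos_notMem_range_of_snd m m' (by simpa [stretchPos, Dir.vec] using hmem),
      by simp [gapEdge, stretchPos, Dir.vec, hlo, hhi, unstretchLo_stretch, unstretchHi_stretch]⟩

variable {a b : ℕ}

lemma stretchPos_mem_gplusV_rect (ha : 0 < a) (hb : 0 < b) {z : Pos}
    (hz : z ∈ gplusV (rect a b)) : stretchPos m m' z ∈ gplusV (rect (a + m) (b + m')) := by
  rw [mem_gplusV_rect ha hb] at hz
  rw [mem_gplusV_rect (by omega) (by omega)]
  simp only [stretchPos, stretch]
  push_cast
  split_ifs <;> omega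

lemma stretchPos_mem_port_rect (ha : 0 < a) (hb : 0 < b) {d : Dir} {z : Pos}
    (hz : z ∈ port (rect a b) d) : stretchPos m m' z ∈ port (rect (a + m) (b + m')) d := by
  refine ⟨by simp [gridOf_rect (a := a + m) (b := b + m') (by omega) (by omega)], ?_⟩
  have hz := mem_embedN_image_rect.1 hz.2
  rw [mem_embedN_image_rect]
  simp only [stretchPos, stretch]
  push_cast
  cases d <;> simp only [Dir.vec, Prod.fst_sub, Prod.snd_sub] at hz ⊢ <;> split_ifs <;> omega

lemma exists_stretch_path_of_step (ha : 0 < a) (hb : 0 < b) {u v : Pos} {d : Dir}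
    (hd : d = .E ∨ d = .N) (hu : u ∈ gplusV (rect a b)) (hv : v ∈ gplusV (rect a b))
    (huv : v = u + d.vec) :
    ∃ w : (gplus (rect (a + m) (b + m'))).Walk (stretchPos m m' u) (stretchPos m m' v),
      w.IsPath ∧ ∀ z ∈ w.support, OnSubdividedEdge (stretchPos m m') (gapEdge m m') u v z := by
  subst huv
  obtain ⟨n, hn, hstep, hgap⟩ := exists_stretchPos_add_vec m m' hd u
  set f : ℕ → Pos := fun i => stretchPos m m' u + (i : ℤ) • d.vec with hf
  have hfn : f n = stretchPos m m' (u + d.vec) := hstep.symm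
  have hmem : ∀ i ≤ n, f i ∈ gplusV (rect (a + m) (b + m')) := fun i hi =>
    add_smul_vec_mem_gplusV_rect (by omega) (by omega) hi
      (stretchPos_mem_gplusV_rect m m' ha hb hu)
      (hstep ▸ stretchPos_mem_gplusV_rect m m' ha hb hv)
  have hadj : ∀ i < n, (gplus (rect (a + m) (b + m'))).Adj (f i) (f (i + 1)) :=
    fun i hi => ⟨hmem i hi.le, hmem (i + 1) hi, d,
      by simp only [hf, Nat.cast_succ, add_smul, one_smul, add_assoc]⟩
  have hf_inj : Function.Injective f := by
    intro i j hij
    cases d <;> simpa [hf, Dir.vec] using hij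
  obtain ⟨w, hw⟩ := exists_walk_support_eq_map_range f n hadj
  refine ⟨w.copy (by simp [hf]) hfn, ?_, ?_⟩
  · rw [SimpleGraph.Walk.isPath_copy, SimpleGraph.Walk.isPath_def, hw]
    exact (List.nodup_range).map hf_inj
  · rw [SimpleGraph.Walk.support_copy, hw]
    rintro _ hz
    obtain ⟨i, hi, rfl⟩ := List.mem_map.1 hz
    rw [List.mem_range] at hi
    rcases Nat.eq_zero_or_pos i with rfl | hi₀
    · exact Or.inl (by simp [hf])
    rcases (Nat.lt_succ_iff.1 hi).eq_or_lt with rfl | hin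
    · exact Or.inr (Or.inl hfn)
    · exact Or.inr (Or.inr (hgap i hi₀ hin))

lemma exists_stretch_path (ha : 0 < a) (hb : 0 < b) {u v : Pos}
    (h : (gplus (rect a b)).Adj u v) :
    ∃ w : (gplus (rect (a + m) (b + m'))).Walk (stretchPos m m' u) (stretchPos m m' v),
      w.IsPath ∧ ∀ z ∈ w.support, OnSubdividedEdge (stretchPos m m') (gapEdge m m') u v z := by
  obtain ⟨hu, hv, d, huv⟩ := h
  obtain ⟨d', hd', huv' | hvu⟩ : ∃ d' : Dir, (d' = .E ∨ d' = .N) ∧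
      (v = u + d'.vec ∨ u = v + d'.vec) := by
    cases d
    · exact ⟨.N, .inr rfl, .inl huv⟩
    · exact ⟨.E, .inl rfl, .inl huv⟩
    · exact ⟨.N, .inr rfl, .inr (by subst huv; ext <;> simp [Dir.vec])⟩
    · exact ⟨.E, .inl rfl, .inr (by subst huv; ext <;> simp [Dir.vec])⟩
  · exact exists_stretch_path_of_step m m' ha hb hd' hu hv huv'
  · obtain ⟨w, hw, hon⟩ := exists_stretch_path_of_step m m' ha hb hd' hv hu hvu
    exact ⟨w.reverse, hw.reverse, fun z hz => (hon z (by simpa using hz)).symm⟩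

theorem rect_subconnector_rect (ha : 0 < a) (hb : 0 < b) :
    Subconnector (rect a b) (rect (a + m) (b + m')) :=
  subconnector_of_onSubdividedEdge (stretchPos_injective m m').injOn
    (fun _ _ hv => stretchPos_mem_port_rect m m' ha hb hv)
    (fun _ _ h => exists_stretch_path m m' ha hb h)

end Stretch

lemma Kgen_subset_rect : Kgen ⊆ rect 6 6 := fun _ hp => ⟨hp.1, hp.2.1⟩

/-- `H³ = σ_H³({(0,0)})` is the 8×8 square `{0,…,7}²`, and
`K ⪯ H³`, where `H = {0,1}²`. -/
theorem K_subconnector_H3 :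
    iterG Hsq 3 = {p : NPos | p.1 < 8 ∧ p.2 < 8} ∧
    Subconnector Kgen (iterG Hsq 3) := by
  have hH3 : iterG Hsq 3 = rect 8 8 := iterG_rect two_pos two_pos 3
  refine ⟨hH3, hH3 ▸ ?_⟩
  exact (rect_subconnector_rect 2 2 (a := 6) (b := 6) (by norm_num) (by norm_num)).of_subset
    Kgen_subset_rect (by simp [gridOf_rect (a := 6) (b := 6)])

end SelfAssembly
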